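/- Let E = [−2π, −π) ∪ [π, 2π). There exists a measurable set G₀ ⊆ [π/2, 7π/8) ∪ [2π, 3π) that is 2π-translation congruent to [0, π) and 2-dilation congruent to [π, 7π/4), and for any such G₀ the set G = [−π, −π/2) ∪ G₀ ∪ [7π/2, 4π) is a dyadic wavelet set contained in 2E ∪ E ∪ (1/2)E = [−4π, −π/2) ∪ [π/2, 4π) for which (E, G) is not an interpolation pair. In particular, a wavelet set contained in 2E ∪ E ∪ (1/2)E need not form an interpolation pair with E. -/

import Mathlib

open MeasureTheory Set
open scoped Real symmDiff

noncomputable section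

/-- An a.e. (modulo Lebesgue-null sets) partition of the set `A` by the family `P`. -/
def IsAEPartition {ι : Type*} (P : ι → Set ℝ) (A : Set ℝ) : Prop :=
  volume (A ∆ (⋃ i, P i)) = 0 ∧ ∀ i j : ι, i ≠ j → volume (P i ∩ P j) = 0

/-- `E ⊆ ℝ` is a dyadic wavelet set: its `2πℤ`-translates and its `2ℤ`-dilates each
partition `ℝ` modulo Lebesgue-null sets. -/
def IsDyadicWaveletSet (E : Set ℝ) : Prop :=
  MeasurableSet E ∧
  (∀ᵐ x : ℝ ∂volume, ∃! n : ℤ, x + 2 * Real.pi * n ∈ E) ∧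
  (∀ᵐ x : ℝ ∂volume, ∃! k : ℤ, (2 : ℝ) ^ k * x ∈ E)

/-- `σ` is (a representative of) the interpolation map `σ_E^F` for wavelet sets `E, F`. -/
def IsInterpolationMap (E F : Set ℝ) (σ : ℝ → ℝ) : Prop :=
  Measurable σ ∧ σ 0 = 0 ∧
  (∀ᵐ s : ℝ ∂volume, s ∈ E → σ s ∈ F ∧ ∃ n : ℤ, σ s - s = 2 * Real.pi * n) ∧
  (∀ n : ℤ, ∀ᵐ s : ℝ ∂volume, (2 : ℝ) ^ (-n) * s ∈ E →
    σ s = (2 : ℝ) ^ n * σ ((2 : ℝ) ^ (-n) * s))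

/-- The `2π`-congruence domain of a map `σ`. -/
def CongruenceDomain (σ : ℝ → ℝ) : Set ℝ :=
  {s : ℝ | ∃ n : ℤ, σ s - s = 2 * Real.pi * n}

/-- `A` is `2π`-translation congruent to `B`. -/
def TransCongruent (A B : Set ℝ) : Prop :=
  ∃ P : ℤ → Set ℝ, (∀ n, MeasurableSet (P n)) ∧ IsAEPartition P A ∧
    IsAEPartition (fun (n : ℤ) => (fun x => x + 2 * Real.pi * (n : ℝ)) '' P n) B

/-- `A` is `2`-dilation congruent to `B`. -/
def DilCongruent (A B : Set ℝ) : Prop :=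
  ∃ P : ℤ → Set ℝ, (∀ n, MeasurableSet (P n)) ∧ IsAEPartition P A ∧
    IsAEPartition (fun (n : ℤ) => (fun x => (2 : ℝ) ^ n * x) '' P n) B

/-- The properties required of the piece `G₀` in Example 8 of the paper: a measurable
subset of `[π/2, 7π/8) ∪ [2π, 3π)` that is `2π`-translation congruent to `[0, π)` and
`2`-dilation congruent to `[π, 7π/4)`. -/
def GoodGzero (G₀ : Set ℝ) : Prop :=
  MeasurableSet G₀ ∧
  G₀ ⊆ Ico (π / 2) (7 * π / 8) ∪ Ico (2 * π) (3 * π) ∧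
  TransCongruent G₀ (Ico 0 π) ∧
  DilCongruent G₀ (Ico π (7 * π / 4))

/-!
A set congruent, piecewise by the maps `x ↦ x + 2πn` (resp. `x ↦ 2ⁿx`), to a set meeting almost
every orbit exactly once has the same property, since these maps preserve null sets. Here
`G = [-π, -π/2) ∪ G₀ ∪ [7π/2, 4π)` is `2π`-translation congruent to `[0, 2π)` and `2`-dilation
congruent to `[-π, -π/2) ∪ [π, 2π)`, so it is a wavelet set.

A suitable `G₀` is `A ∪ (([0, π) \ A) + 2π)`, where `A = [3π/4, 7π/8) ∪ c(A)` is the self-similar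
set of the contraction `c x = x/4 + π/2`. As `(x + 2π)/2 = 2 c(x)`, halving the second part and
doubling `A` gives `2 (A ∪ c([0, π) \ A)) = 2 [π/2, 7π/8) = [π, 7π/4)`.

For `s ∈ [3π/2, 7π/4)` the only point of `G` in `s + 2πℤ` is `s + 2π`, and likewise for
`s/2 + π`, so `σ (σ s) = σ (s + 2π) = 2 σ (s/2 + π) = s + 6π ≠ s` on a set of positive measure.
-/

theorem IsAEPartition.union {ι : Type*} {P Q : ι → Set ℝ} {S T : Set ℝ}
    (hP : IsAEPartition P S) (hQ : IsAEPartition Q T) (hST : AEDisjoint volume S T) :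
    IsAEPartition (fun i => P i ∪ Q i) (S ∪ T) := by
  obtain ⟨hPS, hPP⟩ := hP
  obtain ⟨hQT, hQQ⟩ := hQ
  have hPQ : ∀ i j, volume (P i ∩ Q j) = 0 := fun i j => by
    refine measure_mono_null (fun x ⟨hxP, hxQ⟩ => ?_)
      (measure_union_null (measure_union_null hPS hQT) hST)
    have hxP' := (subset_iUnion P i).trans (le_symmDiff_sup_left S _) hxP
    have hxQ' := (subset_iUnion Q j).trans (le_symmDiff_sup_left T _) hxQ
    simp only [sup_eq_union, mem_union] at hxP' hxQ'
    simp only [mem_union, mem_inter_iff]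
    tauto
  refine ⟨?_, fun i j hij => ?_⟩
  · refine measure_mono_null (fun x => ?_) (measure_union_null hPS hQT)
    simp only [iUnion_union_distrib, mem_symmDiff, mem_union]
    tauto
  · refine measure_mono_null (fun x => ?_) (measure_union_null (measure_union_null
      (hPP i j hij) (hQQ i j hij)) (measure_union_null (hPQ i j) (hPQ j i)))
    simp only [mem_inter_iff, mem_union]
    tauto

theorem isAEPartition_ite {ι : Type*} [DecidableEq ι] (i₀ : ι) (A : Set ℝ) :
    IsAEPartition (fun i => if i = i₀ then A else ∅) A := by
  have hA : (⋃ i, if i = i₀ then A else ∅) = A := by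
    ext
    simp
  refine ⟨by rw [hA, symmDiff_self, bot_eq_empty, measure_empty], fun i j hij => ?_⟩
  obtain rfl | hi := eq_or_ne i i₀
  · simp [hij.symm]
  · simp [hi]

def CongruentBy (f : ℤ → ℝ → ℝ) (A B : Set ℝ) : Prop :=
  ∃ P : ℤ → Set ℝ, (∀ n, MeasurableSet (P n)) ∧ IsAEPartition P A ∧
    IsAEPartition (fun n => f n '' P n) B

def IsAETile (f : ℤ → ℝ → ℝ) (S : Set ℝ) : Prop :=
  ∀ᵐ x : ℝ ∂volume, ∃! n : ℤ, f n x ∈ S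

theorem congruentBy_image (f : ℤ → ℝ → ℝ) (n : ℤ) {A : Set ℝ} (hA : MeasurableSet A) :
    CongruentBy f A (f n '' A) := by
  refine ⟨fun m => if m = n then A else ∅, fun m => ?_, isAEPartition_ite n A, ?_⟩
  · dsimp only
    split_ifs
    exacts [hA, .empty]
  · convert isAEPartition_ite n (f n '' A) using 2 with m
    dsimp only
    split_ifs with h
    · rw [h]
    · exact image_empty _

theorem existsUnique_mem_iUnion_of_image {α : Type*} {f : ℤ → α → α}
    (hzero : ∀ x, f 0 x = x) (hadd : ∀ m n x, f m (f n x) = f (m + n) x)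
    {P : ℤ → Set α} {x : α} (hx : ∃! m, f m x ∈ ⋃ i, f i '' P i)
    (hdisj : ∀ m i j, f m x ∈ f i '' P i → f m x ∈ f j '' P j → i = j) :
    ∃! n, f n x ∈ ⋃ i, P i := by
  obtain ⟨m, hm, hm_unique⟩ := hx
  obtain ⟨i, y, hy, hyx⟩ := mem_iUnion.1 hm
  have hshift : ∀ n j, f n x ∈ P j → j + n = m ∧ f m x ∈ f j '' P j := fun n j hn => by
    have hmem : f (j + n) x ∈ f j '' P j := ⟨f n x, hn, hadd j n x⟩
    obtain rfl := hm_unique _ (mem_iUnion.2 ⟨j, hmem⟩)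
    exact ⟨rfl, hmem⟩
  have hy' : f (-i + m) x ∈ P i := by
    rwa [← hadd, ← hyx, hadd, neg_add_cancel, hzero]
  refine ⟨-i + m, mem_iUnion.2 ⟨i, hy'⟩, fun n hn => ?_⟩
  obtain ⟨j, hj⟩ := mem_iUnion.1 hn
  obtain ⟨hjn, hmj⟩ := hshift n j hj
  obtain rfl := hdisj m i j (hyx ▸ mem_image_of_mem _ hy) hmj
  omega

theorem mem_iff_of_notMem_symmDiff {α : Type*} {x : α} {S T : Set α} (h : x ∉ S ∆ T) :
    x ∈ S ↔ x ∈ T := by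
  rw [mem_symmDiff] at h
  tauto

theorem ae_forall_apply_notMem {α ι : Type*} [MeasurableSpace α] [Countable ι] {μ : Measure α}
    {g : ι → α → α} (hg : ∀ i, Measure.QuasiMeasurePreserving (g i) μ μ) {N : Set α}
    (hN : μ N = 0) : ∀ᵐ x ∂μ, ∀ i, g i x ∉ N :=
  ae_all_iff.2 fun i => (hg i).ae (measure_eq_zero_iff_ae_notMem.1 hN)

section Congruence

variable {f : ℤ → ℝ → ℝ} {A A' B B' : Set ℝ}

theorem CongruentBy.union (h : CongruentBy f A B) (h' : CongruentBy f A' B')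
    (hA : AEDisjoint volume A A') (hB : AEDisjoint volume B B') :
    CongruentBy f (A ∪ A') (B ∪ B') := by
  obtain ⟨P, hPm, hPA, hPB⟩ := h
  obtain ⟨Q, hQm, hQA, hQB⟩ := h'
  refine ⟨fun n => P n ∪ Q n, fun n => (hPm n).union (hQm n), hPA.union hQA hA, ?_⟩
  simp only [image_union]
  exact hPB.union hQB hB

theorem CongruentBy.isAETile (hzero : ∀ x, f 0 x = x) (hadd : ∀ m n x, f m (f n x) = f (m + n) x)
    (hf : ∀ n, Measure.QuasiMeasurePreserving (f n) volume volume)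
    (h : CongruentBy f A B) (hB : IsAETile f B) : IsAETile f A := by
  obtain ⟨P, -, ⟨hPA, -⟩, hPB, hPP⟩ := h
  have hpair : ∀ᵐ x : ℝ ∂volume, ∀ i j, i ≠ j → ∀ m, f m x ∉ f i '' P i ∩ f j '' P j := by
    refine ae_all_iff.2 fun i => ae_all_iff.2 fun j => ?_
    by_cases hij : i = j
    · exact ae_of_all _ fun _ h => absurd hij h
    · filter_upwards [ae_forall_apply_notMem hf (hPP i j hij)] with x hx _ using hx
  filter_upwards [hB, ae_forall_apply_notMem hf hPA, ae_forall_apply_notMem hf hPB, hpair]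
    with x hxB hxA hxPB hx
  simp_rw [mem_iff_of_notMem_symmDiff (hxPB _)] at hxB
  simp_rw [mem_iff_of_notMem_symmDiff (hxA _)]
  exact existsUnique_mem_iUnion_of_image hzero hadd hxB fun m i j hi hj =>
    by_contra fun hij => hx i j hij m ⟨hi, hj⟩

end Congruence

/- `TransCongruent`, `DilCongruent` and the two tiling conditions in `IsDyadicWaveletSet` are, by
definition, `CongruentBy` and `IsAETile` for the following two families of maps. -/
def twoPiShift (n : ℤ) (x : ℝ) : ℝ := x + 2 * π * n

def dyadicDilate (n : ℤ) (x : ℝ) : ℝ := (2 : ℝ) ^ n * x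

theorem CongruentBy.isAETile_twoPiShift {A B : Set ℝ} (h : CongruentBy twoPiShift A B)
    (hB : IsAETile twoPiShift B) : IsAETile twoPiShift A :=
  h.isAETile (fun x => by simp [twoPiShift])
    (fun m n x => by simp only [twoPiShift]; push_cast; ring)
    (fun n => (measurePreserving_add_right volume _).quasiMeasurePreserving) hB

theorem CongruentBy.isAETile_dyadicDilate {A B : Set ℝ} (h : CongruentBy dyadicDilate A B)
    (hB : IsAETile dyadicDilate B) : IsAETile dyadicDilate A :=
  h.isAETile (fun x => by simp [dyadicDilate])
    (fun m n x => by simp only [dyadicDilate]; rw [zpow_add₀ two_ne_zero, mul_assoc])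
    (fun n => Measure.quasiMeasurePreserving_smul volume (zpow_ne_zero n two_ne_zero)) hB

theorem twoPiShift_image_Ico (n : ℤ) (a b : ℝ) :
    twoPiShift n '' Ico a b = Ico (a + 2 * π * n) (b + 2 * π * n) :=
  image_add_const_Ico _ a b

theorem dyadicDilate_image_Ico (n : ℤ) (a b : ℝ) :
    dyadicDilate n '' Ico a b = Ico (2 ^ n * a) (2 ^ n * b) :=
  image_mul_left_Ico (zpow_pos two_pos n) a b

theorem isAETile_twoPiShift_Ico : IsAETile twoPiShift (Ico 0 (2 * π)) :=
  ae_of_all _ fun x => by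
    simpa [twoPiShift, zsmul_eq_mul, mul_comm] using
      existsUnique_add_zsmul_mem_Ico Real.two_pi_pos x 0

theorem log_dyadicDilate {x : ℝ} (hx : 0 < x) (k : ℤ) :
    Real.log (dyadicDilate k x) = Real.log x + k • Real.log 2 := by
  rw [dyadicDilate, Real.log_mul (zpow_ne_zero k two_ne_zero) hx.ne', Real.log_zpow, zsmul_eq_mul,
    add_comm]

theorem existsUnique_dyadicDilate_mem_Ico {x c : ℝ} (hx : 0 < x) (hc : 0 < c) :
    ∃! k : ℤ, dyadicDilate k x ∈ Ico c (2 * c) := by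
  have hmem : ∀ k : ℤ, dyadicDilate k x ∈ Ico c (2 * c) ↔
      Real.log x + k • Real.log 2 ∈ Ico (Real.log c) (Real.log c + Real.log 2) := fun k => by
    have hk : 0 < dyadicDilate k x := mul_pos (zpow_pos two_pos k) hx
    rw [← log_dyadicDilate hx, add_comm (Real.log c), ← Real.log_mul two_ne_zero hc.ne', mem_Ico,
      mem_Ico, Real.log_le_log_iff hc hk, Real.log_lt_log_iff hk (by positivity)]
  simp_rw [hmem]
  exact existsUnique_add_zsmul_mem_Ico (Real.log_pos one_lt_two) _ _

theorem existsUnique_dyadicDilate_mem_Ioc {x c : ℝ} (hx : 0 < x) (hc : 0 < c) :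
    ∃! k : ℤ, dyadicDilate k x ∈ Ioc c (2 * c) := by
  have hmem : ∀ k : ℤ, dyadicDilate k x ∈ Ioc c (2 * c) ↔
      Real.log x + k • Real.log 2 ∈ Ioc (Real.log c) (Real.log c + Real.log 2) := fun k => by
    have hk : 0 < dyadicDilate k x := mul_pos (zpow_pos two_pos k) hx
    rw [← log_dyadicDilate hx, add_comm (Real.log c), ← Real.log_mul two_ne_zero hc.ne', mem_Ioc,
      mem_Ioc, Real.log_lt_log_iff hc hk, Real.log_le_log_iff hk (by positivity)]
  simp_rw [hmem]
  exact existsUnique_add_zsmul_mem_Ioc (Real.log_pos one_lt_two) _ _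

theorem isAETile_dyadicDilate_Ico_union_Ico :
    IsAETile dyadicDilate (Ico (-π) (-(π / 2)) ∪ Ico π (2 * π)) := by
  filter_upwards [volume.ae_ne 0] with x hx
  rcases hx.lt_or_gt with hneg | hpos
  · convert existsUnique_dyadicDilate_mem_Ioc (neg_pos.2 hneg) (half_pos Real.pi_pos)
      using 2 with k
    have hk : dyadicDilate k x < 0 := mul_neg_of_pos_of_neg (zpow_pos two_pos k) hneg
    simp only [dyadicDilate, mul_neg, mem_union, mem_Ico, mem_Ioc] at hk ⊢
    constructor
    · rintro (h | h) <;> constructor <;> linarith [h.1, h.2]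
    · intro h; left; constructor <;> linarith [h.1, h.2]
  · convert existsUnique_dyadicDilate_mem_Ico hpos Real.pi_pos using 2 with k
    have hk : 0 < dyadicDilate k x := mul_pos (zpow_pos two_pos k) hpos
    simp only [dyadicDilate, mem_union, mem_Ico] at hk ⊢
    constructor
    · rintro (h | h)
      · linarith [h.2, Real.pi_pos]
      · exact h
    · exact Or.inr

theorem Ico_disjoint_Ico_of_le {α : Type*} [LinearOrder α] {a b c d : α} (h : b ≤ c) :
    Disjoint (Ico a b) (Ico c d) :=
  Ico_disjoint_Ico_same.mono_right (Ico_subset_Ico_left h)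

def contract (x : ℝ) : ℝ := 4⁻¹ * x + π / 2

theorem contract_injective : Function.Injective contract := fun x y h => by
  simpa [contract] using h

theorem contract_image_Ico (a b : ℝ) : contract '' Ico a b = Ico (contract a) (contract b) :=
  image_affine_Ico (by norm_num) _ _ _

theorem mapsTo_contract : MapsTo contract (Icc (π / 2) (7 * π / 8)) (Icc (π / 2) (7 * π / 8)) :=
  fun x ⟨h₁, h₂⟩ => by
    constructor <;> simp only [contract] <;> linarith [Real.pi_pos]

def lowPiece : Set ℝ :=
  ⋃ k : ℕ, Ico (contract^[k] (3 * π / 4)) (contract^[k] (7 * π / 8))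

def highPiece : Set ℝ := twoPiShift 1 '' (Ico 0 π \ lowPiece)

def exampleGzero : Set ℝ := lowPiece ∪ highPiece

theorem lowPiece_eq : lowPiece = Ico (3 * π / 4) (7 * π / 8) ∪ contract '' lowPiece := by
  simp only [lowPiece, image_iUnion, contract_image_Ico, ← Function.iterate_succ_apply' contract]
  exact (union_iUnion_nat_succ _).symm

theorem measurableSet_lowPiece : MeasurableSet lowPiece :=
  .iUnion fun _ => measurableSet_Ico

theorem lowPiece_subset : lowPiece ⊆ Ico (π / 2) (7 * π / 8) := by
  refine iUnion_subset fun k x ⟨h₁, h₂⟩ => ?_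
  have hπ := Real.pi_pos
  have ha := mapsTo_contract.iterate k
    (show 3 * π / 4 ∈ Icc (π / 2) (7 * π / 8) from ⟨by linarith, by linarith⟩)
  have hb := mapsTo_contract.iterate k
    (show 7 * π / 8 ∈ Icc (π / 2) (7 * π / 8) from ⟨by linarith, by linarith⟩)
  exact ⟨ha.1.trans h₁, h₂.trans_le hb.2⟩

theorem contract_image_lowPiece_subset : contract '' lowPiece ⊆ Ico (π / 2) (3 * π / 4) := by
  rintro _ ⟨x, hx, rfl⟩
  obtain ⟨h₁, h₂⟩ := lowPiece_subset hx
  constructor <;> simp only [contract] <;> linarith [Real.pi_pos]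

theorem contract_image_Ico_diff_lowPiece :
    contract '' (Ico 0 π \ lowPiece) = Ico (π / 2) (3 * π / 4) \ contract '' lowPiece := by
  rw [image_sdiff contract_injective, contract_image_Ico]
  congr 2 <;> simp only [contract] <;> ring

theorem lowPiece_union_contract_image :
    lowPiece ∪ contract '' (Ico 0 π \ lowPiece) = Ico (π / 2) (7 * π / 8) := by
  have hπ := Real.pi_pos
  rw [contract_image_Ico_diff_lowPiece]
  nth_rw 1 [lowPiece_eq]
  rw [union_assoc, union_sdiff_cancel contract_image_lowPiece_subset, union_comm,
    Ico_union_Ico_eq_Ico (by linarith) (by linarith)]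

theorem disjoint_lowPiece_contract_image :
    Disjoint lowPiece (contract '' (Ico 0 π \ lowPiece)) := by
  rw [contract_image_Ico_diff_lowPiece]
  nth_rw 1 [lowPiece_eq]
  exact Disjoint.union_left (Ico_disjoint_Ico_same.symm.mono_right sdiff_subset)
    disjoint_sdiff_right

theorem measurableSet_twoPiShift_image (n : ℤ) {S : Set ℝ} (hS : MeasurableSet S) :
    MeasurableSet (twoPiShift n '' S) :=
  (MeasurableEquiv.addRight (2 * π * n)).measurableEmbedding.measurableSet_image.2 hS

theorem twoPiShift_neg_one_image_twoPiShift_one (S : Set ℝ) :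
    twoPiShift (-1) '' (twoPiShift 1 '' S) = S := by
  rw [image_image]
  convert image_id S
  simp [twoPiShift]

theorem measurableSet_highPiece : MeasurableSet highPiece :=
  measurableSet_twoPiShift_image 1 (measurableSet_Ico.diff measurableSet_lowPiece)

theorem highPiece_subset : highPiece ⊆ Ico (2 * π) (3 * π) := by
  refine (image_mono sdiff_subset).trans_eq ?_
  rw [twoPiShift_image_Ico]
  congr 1 <;> push_cast <;> ring

theorem disjoint_lowPiece_highPiece : Disjoint lowPiece highPiece :=
  (Ico_disjoint_Ico_of_le (by linarith [Real.pi_pos])).mono lowPiece_subset highPiece_subset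

theorem transCongruent_exampleGzero : TransCongruent exampleGzero (Ico 0 π) := by
  have hπ := Real.pi_pos
  have hlow : twoPiShift 0 '' lowPiece = lowPiece := by
    convert image_id lowPiece
    simp [twoPiShift]
  have hhigh : twoPiShift (-1) '' highPiece = Ico 0 π \ lowPiece :=
    twoPiShift_neg_one_image_twoPiShift_one _
  have h := (congruentBy_image twoPiShift 0 measurableSet_lowPiece).union
    (congruentBy_image twoPiShift (-1) measurableSet_highPiece)
    disjoint_lowPiece_highPiece.aedisjoint
    (by rw [hlow, hhigh]; exact disjoint_sdiff_right.aedisjoint)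
  rwa [hlow, hhigh, union_sdiff_cancel] at h
  exact lowPiece_subset.trans (Ico_subset_Ico (by linarith) (by linarith))

theorem dyadicDilate_image_highPiece :
    dyadicDilate (-1) '' highPiece = dyadicDilate 1 '' (contract '' (Ico 0 π \ lowPiece)) := by
  rw [highPiece, image_image, image_image]
  refine image_congr fun x _ => ?_
  simp only [dyadicDilate, twoPiShift, contract, zpow_neg, zpow_one]
  ring

theorem dilCongruent_exampleGzero : DilCongruent exampleGzero (Ico π (7 * π / 4)) := by
  have hinj : Function.Injective (dyadicDilate 1) := mul_right_injective₀ (by norm_num)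
  have h := (congruentBy_image dyadicDilate 1 measurableSet_lowPiece).union
    (congruentBy_image dyadicDilate (-1) measurableSet_highPiece)
    disjoint_lowPiece_highPiece.aedisjoint (by
      rw [dyadicDilate_image_highPiece]
      exact ((disjoint_image_iff hinj).2 disjoint_lowPiece_contract_image).aedisjoint)
  rw [dyadicDilate_image_highPiece, ← image_union, lowPiece_union_contract_image,
    dyadicDilate_image_Ico, zpow_one, mul_div_cancel₀ π two_ne_zero,
    show (2 : ℝ) * (7 * π / 8) = 7 * π / 4 by ring] at h
  exact h

theorem goodGzero_exampleGzero : GoodGzero exampleGzero :=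
  ⟨measurableSet_lowPiece.union measurableSet_highPiece,
    union_subset_union lowPiece_subset highPiece_subset,
    transCongruent_exampleGzero, dilCongruent_exampleGzero⟩

def exampleWaveletSet (G₀ : Set ℝ) : Set ℝ := Ico (-π) (-(π / 2)) ∪ G₀ ∪ Ico (7 * π / 2) (4 * π)

section ExampleWaveletSet

variable {G₀ : Set ℝ} (hsub : G₀ ⊆ Ico (π / 2) (7 * π / 8) ∪ Ico (2 * π) (3 * π))
include hsub

theorem disjoint_Ico_neg_pi_of_subset : Disjoint (Ico (-π) (-(π / 2))) G₀ := by
  have hπ := Real.pi_pos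
  exact Disjoint.mono_right hsub <| .union_right (Ico_disjoint_Ico_of_le (by linarith))
    (Ico_disjoint_Ico_of_le (by linarith))

theorem disjoint_Ico_seven_pi_div_two_of_subset :
    Disjoint (Ico (-π) (-(π / 2)) ∪ G₀) (Ico (7 * π / 2) (4 * π)) := by
  have hπ := Real.pi_pos
  refine .union_left (Ico_disjoint_Ico_of_le (by linarith)) (Disjoint.mono_left hsub ?_)
  exact .union_left (Ico_disjoint_Ico_of_le (by linarith)) (Ico_disjoint_Ico_of_le (by linarith))

theorem exampleWaveletSet_subset :
    exampleWaveletSet G₀ ⊆ Ico (-(4 * π)) (-(π / 2)) ∪ Ico (π / 2) (4 * π) := by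
  have hπ := Real.pi_pos
  refine union_subset (union_subset ?_ ?_) ?_
  · exact (Ico_subset_Ico_left (by linarith)).trans subset_union_left
  · refine hsub.trans (union_subset ?_ ?_ |>.trans subset_union_right) <;>
      exact Ico_subset_Ico (by linarith) (by linarith)
  · exact (Ico_subset_Ico_left (by linarith)).trans subset_union_right

theorem isAETile_twoPiShift_exampleWaveletSet (htrans : TransCongruent G₀ (Ico 0 π)) :
    IsAETile twoPiShift (exampleWaveletSet G₀) := by
  have hπ := Real.pi_pos
  have h₁ : CongruentBy twoPiShift (Ico (-π) (-(π / 2))) (Ico π (3 * π / 2)) := by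
    convert congruentBy_image twoPiShift 1 measurableSet_Ico
    rw [twoPiShift_image_Ico]
    congr 1 <;> push_cast <;> ring
  have h₂ : CongruentBy twoPiShift (Ico (7 * π / 2) (4 * π)) (Ico (3 * π / 2) (2 * π)) := by
    convert congruentBy_image twoPiShift (-1) measurableSet_Ico
    rw [twoPiShift_image_Ico]
    congr 1 <;> push_cast <;> ring
  have h := h₁.union htrans (disjoint_Ico_neg_pi_of_subset hsub).aedisjoint
    Ico_disjoint_Ico_same.symm.aedisjoint
  rw [union_comm (Ico π _), Ico_union_Ico_eq_Ico (by linarith) (by linarith)] at h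
  have h' := h.union h₂ (disjoint_Ico_seven_pi_div_two_of_subset hsub).aedisjoint
    Ico_disjoint_Ico_same.aedisjoint
  rw [Ico_union_Ico_eq_Ico (by linarith) (by linarith)] at h'
  exact h'.isAETile_twoPiShift isAETile_twoPiShift_Ico

theorem isAETile_dyadicDilate_exampleWaveletSet (hdil : DilCongruent G₀ (Ico π (7 * π / 4))) :
    IsAETile dyadicDilate (exampleWaveletSet G₀) := by
  have hπ := Real.pi_pos
  have h₁ : CongruentBy dyadicDilate (Ico (-π) (-(π / 2))) (Ico (-π) (-(π / 2))) := by
    convert congruentBy_image dyadicDilate 0 measurableSet_Ico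
    rw [dyadicDilate_image_Ico, zpow_zero, one_mul, one_mul]
  have h₂ : CongruentBy dyadicDilate (Ico (7 * π / 2) (4 * π)) (Ico (7 * π / 4) (2 * π)) := by
    convert congruentBy_image dyadicDilate (-1) measurableSet_Ico
    rw [dyadicDilate_image_Ico]
    congr 1 <;> simp <;> ring
  have h := h₁.union hdil (disjoint_Ico_neg_pi_of_subset hsub).aedisjoint
    (Ico_disjoint_Ico_of_le (by linarith)).aedisjoint
  have h' := h.union h₂ (disjoint_Ico_seven_pi_div_two_of_subset hsub).aedisjoint
    (Disjoint.union_left (Ico_disjoint_Ico_of_le (by linarith)) Ico_disjoint_Ico_same).aedisjoint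
  rw [union_assoc (Ico (-π) _) (Ico π _), Ico_union_Ico_eq_Ico (by linarith) (by linarith)] at h'
  exact h'.isAETile_dyadicDilate isAETile_dyadicDilate_Ico_union_Ico

theorem eq_one_of_twoPiShift_mem_exampleWaveletSet {y : ℝ}
    (hy : y ∈ Ico (3 * π / 2) (15 * π / 8)) {n : ℤ} (hn : twoPiShift n y ∈ exampleWaveletSet G₀) :
    n = 1 := by
  have hπ := Real.pi_pos
  obtain ⟨hy₁, hy₂⟩ := hy
  have hlt : ∀ k : ℤ, 2 * π * n < 2 * π * k → n < k := fun k h => by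
    exact_mod_cast lt_of_mul_lt_mul_left h Real.two_pi_pos.le
  have hgt : ∀ k : ℤ, 2 * π * k < 2 * π * n → k < n := fun k h => by
    exact_mod_cast lt_of_mul_lt_mul_left h Real.two_pi_pos.le
  simp only [twoPiShift] at hn
  rcases hn with (⟨hn₁, hn₂⟩ | hn) | ⟨hn₁, hn₂⟩
  · have := hlt (-1) (by push_cast; linarith)
    have := hgt (-2) (by push_cast; linarith)
    omega
  · rcases hsub hn with ⟨hn₁, hn₂⟩ | ⟨hn₁, hn₂⟩
    · have := hlt 0 (by push_cast; linarith)
      have := hgt (-1) (by push_cast; linarith)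
      omega
    · have := hlt 1 (by push_cast; linarith)
      have := hgt 0 (by push_cast; linarith)
      omega
  · have := hlt 2 (by push_cast; linarith)
    have := hgt 0 (by push_cast; linarith)
    omega

theorem not_ae_interpolationMap_involutive {σ : ℝ → ℝ}
    (hσ : IsInterpolationMap (Ico (-(2 * π)) (-π) ∪ Ico π (2 * π)) (exampleWaveletSet G₀) σ) :
    ¬ ∀ᵐ s : ℝ ∂volume, σ (σ s) = s := by
  obtain ⟨-, -, hE, hdil⟩ := hσ
  have hπ := Real.pi_pos
  have hshift : ∀ᵐ s : ℝ ∂volume, s ∈ Ico (3 * π / 2) (15 * π / 8) → σ s = s + 2 * π := by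
    filter_upwards [hE] with s hs hmem
    obtain ⟨hσG, n, hn⟩ := hs (Or.inr ⟨by linarith [hmem.1], by linarith [hmem.2]⟩)
    have hσs : σ s = twoPiShift n s := by rw [twoPiShift]; linarith
    obtain rfl : n = 1 := eq_one_of_twoPiShift_mem_exampleWaveletSet hsub hmem (hσs ▸ hσG)
    rw [hσs, twoPiShift, Int.cast_one, mul_one]
  have hhalf := ((measurePreserving_add_right volume π).quasiMeasurePreserving.comp
    (Measure.quasiMeasurePreserving_smul volume (r := 2⁻¹) (by norm_num))).ae hshift
  have hdil₁ := (measurePreserving_add_right volume (2 * π)).quasiMeasurePreserving.ae (hdil 1)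
  intro hinv
  have hnull : ∀ᵐ s : ℝ ∂volume, s ∉ Ico (3 * π / 2) (7 * π / 4) := by
    filter_upwards [hshift, hhalf, hdil₁, hinv] with s h₁ h₂ h₃ h₄ ⟨hs₁, hs₂⟩
    simp only [Function.comp_apply, smul_eq_mul] at h₂
    have harg : (2 : ℝ) ^ (-(1 : ℤ)) * (s + 2 * π) = 2⁻¹ * s + π := by
      rw [zpow_neg_one]
      ring
    rw [harg, zpow_one] at h₃
    have hσσ : σ (s + 2 * π) = s := by
      rw [← h₁ ⟨by linarith, by linarith⟩, h₄]
    have := h₃ (Or.inr ⟨by linarith, by linarith⟩)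
    rw [hσσ, h₂ ⟨by linarith, by linarith⟩] at this
    linarith
  rw [← measure_eq_zero_iff_ae_notMem, Real.volume_Ico, ENNReal.ofReal_eq_zero] at hnull
  linarith

end ExampleWaveletSet

/-- Example 8 of the paper.  Let `E = [−2π, −π) ∪ [π, 2π)`.  There
exists `G₀` as above, and for any such `G₀` the set
`G = [−π, −π/2) ∪ G₀ ∪ [7π/2, 4π)` is a dyadic wavelet set contained in
`2E ∪ E ∪ (1/2)E = [−4π, −π/2) ∪ [π/2, 4π)` such that `(E, G)` is not an
interpolation pair. -/
theorem stmt_13 :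
    (∃ G₀ : Set ℝ, GoodGzero G₀) ∧
    (∀ G₀ : Set ℝ, GoodGzero G₀ →
      IsDyadicWaveletSet (Ico (-π) (-(π / 2)) ∪ G₀ ∪ Ico (7 * π / 2) (4 * π)) ∧
      (Ico (-π) (-(π / 2)) ∪ G₀ ∪ Ico (7 * π / 2) (4 * π)) ⊆
        Ico (-(4 * π)) (-(π / 2)) ∪ Ico (π / 2) (4 * π) ∧
      ∀ σ : ℝ → ℝ,
        IsInterpolationMap (Ico (-(2 * π)) (-π) ∪ Ico π (2 * π))
          (Ico (-π) (-(π / 2)) ∪ G₀ ∪ Ico (7 * π / 2) (4 * π)) σ →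
        ¬ (∀ᵐ s : ℝ ∂volume, σ (σ s) = s)) := by
  refine ⟨⟨exampleGzero, goodGzero_exampleGzero⟩, fun G₀ ⟨hmeas, hsub, htrans, hdil⟩ => ?_⟩
  refine ⟨⟨(measurableSet_Ico.union hmeas).union measurableSet_Ico,
    isAETile_twoPiShift_exampleWaveletSet hsub htrans,
    isAETile_dyadicDilate_exampleWaveletSet hsub hdil⟩,
    exampleWaveletSet_subset hsub, fun σ => not_ae_interpolationMap_involutive hsub⟩
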